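/- Fix G₁₃ with 1/2 < G₁₃ < 1, and define g* = √(1 − G₁₃)·(√2 − √(1 − G₁₃)). Then g* ∈ (0, 1), and the function r₁₂(G₂₃) = (1 + G₁₃ − G₂₃)·G₂₃ / ((1 + G₂₃ − G₁₃)·G₁₃), defined for G₂₃ ∈ (1 − G₁₃, G₁₃), has strictly positive derivative at every G₂₃ in this interval with G₂₃ < g*, and strictly negative derivative at every G₂₃ in this interval with G₂₃ > g*. -/
import Mathlib

lemma deriv_aux (g13 : ℝ) (hg : 0 < g13) (x : ℝ) (hx : 0 < 1 + x - g13) :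
    HasDerivAt (fun y : ℝ => (1 + g13 - y) * y / ((1 + y - g13) * g13))
      ((((-1) * x + (1 + g13 - x) * 1) * ((1 + x - g13) * g13)
        - (1 + g13 - x) * x * (1 * g13)) / ((1 + x - g13) * g13) ^ 2) x := by
  have hnum : HasDerivAt (fun y : ℝ => (1 + g13 - y) * y)
      ((-1) * x + (1 + g13 - x) * 1) x := by
    have h1 : HasDerivAt (fun y : ℝ => 1 + g13 - y) (-1) x :=
      (hasDerivAt_id x).const_sub (1 + g13)
    exact h1.mul (hasDerivAt_id x)
  have hden : HasDerivAt (fun y : ℝ => (1 + y - g13) * g13) (1 * g13) x := by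
    have h1 : HasDerivAt (fun y : ℝ => 1 + y - g13) 1 x := by
      simpa using ((hasDerivAt_id x).const_add 1).sub_const g13
    exact h1.mul_const g13
  exact hnum.div hden (by positivity)

theorem statement_15 (g13 : ℝ) (h1 : 1 / 2 < g13) (h2 : g13 < 1) :
    Real.sqrt (1 - g13) * (Real.sqrt 2 - Real.sqrt (1 - g13)) ∈ Set.Ioo (0 : ℝ) 1 ∧
    ∀ x ∈ Set.Ioo (1 - g13) g13,
      (x < Real.sqrt (1 - g13) * (Real.sqrt 2 - Real.sqrt (1 - g13)) →
        ∃ d : ℝ, 0 < d ∧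
          HasDerivAt (fun y : ℝ => (1 + g13 - y) * y / ((1 + y - g13) * g13)) d x) ∧
      (Real.sqrt (1 - g13) * (Real.sqrt 2 - Real.sqrt (1 - g13)) < x →
        ∃ d : ℝ, d < 0 ∧
          HasDerivAt (fun y : ℝ => (1 + g13 - y) * y / ((1 + y - g13) * g13)) d x) := by
  set a : ℝ := 1 - g13 with ha_def
  have ha0 : 0 < a := by simp [ha_def]; linarith
  have ha2 : a < 2 := by simp [ha_def]; linarith
  have hg : 0 < g13 := by linarith
  have hsa : Real.sqrt a * Real.sqrt a = a := Real.mul_self_sqrt ha0.le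
  have hsa2 : Real.sqrt a * Real.sqrt 2 = Real.sqrt (2 * a) := by
    rw [mul_comm, ← Real.sqrt_mul (by norm_num)]
  -- g* = √(2a) - a
  have hgstar : Real.sqrt a * (Real.sqrt 2 - Real.sqrt a) = Real.sqrt (2 * a) - a := by
    rw [mul_sub, hsa2, hsa]
  have hsq : Real.sqrt (2 * a) ^ 2 = 2 * a := Real.sq_sqrt (by linarith)
  have hpos2a : 0 < Real.sqrt (2 * a) := Real.sqrt_pos.mpr (by linarith)
  constructor
  · constructor
    · rw [hgstar]
      nlinarith [hsq, hpos2a]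
    · rw [hgstar]
      nlinarith [hsq, hpos2a]
  · intro x hx
    have hx1 : a < x := hx.1
    have hx2 : x < g13 := hx.2
    have hden : 0 < 1 + x - g13 := by simp [ha_def] at hx1 ⊢; linarith
    have hd := deriv_aux g13 hg x hden
    have hxa : 0 < x + a := by linarith
    -- x < g*  ↔  (x+a)^2 < 2a
    constructor
    · intro hlt
      refine ⟨_, ?_, hd⟩
      rw [hgstar] at hlt
      have : x + a < Real.sqrt (2 * a) := by linarith
      have hkey : (x + a) ^ 2 < 2 * a := by nlinarith [hsq]
      have hE : 0 < 2 * a - (x + a) ^ 2 := by linarith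
      have hD : 0 < ((1 + x - g13) * g13) ^ 2 := by positivity
      apply div_pos _ hD
      have : 1 + x - g13 = x + a := by simp [ha_def]; ring
      have heq : (-1 * x + (1 + g13 - x) * 1) * ((1 + x - g13) * g13) - (1 + g13 - x) * x * (1 * g13)
          = g13 * (2 * a - (x + a) ^ 2) := by simp only [ha_def]; ring
      rw [heq]
      exact mul_pos hg hE
    · intro hlt
      refine ⟨_, ?_, hd⟩
      rw [hgstar] at hlt
      have : Real.sqrt (2 * a) < x + a := by linarith
      have hkey : 2 * a < (x + a) ^ 2 := by nlinarith [hsq, hpos2a]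
      have hE : 0 < (x + a) ^ 2 - 2 * a := by linarith
      have hD : 0 < ((1 + x - g13) * g13) ^ 2 := by positivity
      apply div_neg_of_neg_of_pos _ hD
      have h' : 1 + x - g13 = x + a := by simp [ha_def]; ring
      have heq : (-1 * x + (1 + g13 - x) * 1) * ((1 + x - g13) * g13) - (1 + g13 - x) * x * (1 * g13)
          = g13 * (2 * a - (x + a) ^ 2) := by simp only [ha_def]; ring
      rw [heq]
      nlinarith [mul_pos hg hE]
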